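/- Let A be an anti-commutative algebra over a field F and let z ∈ A be a CB-element. Then x·(z·y) = -(x·z)·y for all x, y ∈ A. -/

import Mathlib

/-! The bilinear map `(x, y) ↦ (x·z)·y` is alternating once it vanishes on the diagonal, which the
CB-property gives since `x ∈ C_A(x)`; hence `(y·z)·x = -(x·z)·y`. Anti-commutativity rewrites
`(y·z)·x` as `x·(z·y)`. -/

theorem LinearMap.IsAlt.apply_apply_right_eq_neg {R A : Type*} [CommSemiring R]
    [AddCommGroup A] [Module R A] {mul : A →ₗ[R] A →ₗ[R] A} (hac : mul.IsAlt)
    {z : A} (hz : ∀ x, mul (mul x z) x = 0) (x y : A) :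
    mul x (mul z y) = -mul (mul x z) y := by
  have hzAlt : (mul.comp (mul.flip z)).IsAlt := hz
  calc mul x (mul z y)
      = mul (mul y z) x := by rw [← hac.neg z y, map_neg, LinearMap.neg_apply, ← hac.neg]
    _ = -mul (mul x z) y := (hzAlt.neg x y).symm

theorem stmt_5 (F : Type*) [Field F] (A : Type*) [AddCommGroup A] [Module F A]
    (mul : A →ₗ[F] A →ₗ[F] A)
    (hac : ∀ x : A, mul x x = 0)
    (z : A) (hz : ∀ x y : A, mul x y = 0 → mul (mul x z) y = 0) :
    ∀ x y : A, mul x (mul z y) = - mul (mul x z) y :=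
  LinearMap.IsAlt.apply_apply_right_eq_neg hac fun x => hz x x (hac x)
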